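/- Fix an integer n ≥ 1, a real constant α > 1, an open interval I ⊆ ℝ, and a smooth positive function r : I → ℝ with r'(z) > 0 and (r'/r)'(z) ≥ α·(r'(z)/r(z))² for all z ∈ I. Let û : [0,L] × [0,T) → I be a smooth solution of the reduced flow equation, set μ := (∂û/∂x)², and suppose β : (0,L) × [0,T) → ℝ is a smooth function such that ∂μ/∂t ≤ (∂²μ/∂x²)/(r(û)² + μ) + β·(∂μ/∂x) − 2n·(r'/r)'(û)·μ − (r'/r)'(û)·2μ²/(r(û)² + μ) + 2(n+1)·μ²·r'(û)²/r(û)⁴ on (0,L) × [0,T). Let Z : [0,T) → I be differentiable with Z'(t) = −n·r'(Z(t))/r(Z(t)) and Z(t) ≤ û(x,t) for all (x,t). Then the function ψ(x,t) := μ(x,t)/r(Z(t))² satisfies, on (0,L) × [0,T): ∂ψ/∂t ≤ (∂²ψ/∂x²)/(r(û)² + μ) + β·(∂ψ/∂x) − 2·(r'(û)/r(û))²·ψ·( nα + α·μ/(r(û)² + μ) − (n+1)·ψ − n ). -/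

import Mathlib

open Set Real

/-- Partial derivative in the first (space) variable. -/
noncomputable def pdx (u : ℝ → ℝ → ℝ) : ℝ → ℝ → ℝ := fun x t => deriv (fun y => u y t) x

/-- Partial derivative in the second (time) variable. -/
noncomputable def pdt (u : ℝ → ℝ → ℝ) : ℝ → ℝ → ℝ := fun x t => deriv (fun s => u x s) t

/-- `u : [0,L] × [0,T) → I` is a solution of the reduced flow equation for the
`K`-invariant graphical mean curvature flow in the warped product `ᵣ(G/K) × I` over an
`n`-dimensional rank-one symmetric space, with restricted root value `lam` and
multiplicities `m1`, `m2`. -/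
def IsReducedFlowSolution (n : ℕ) (lam : ℝ) (m1 m2 : ℕ) (L T : ℝ)
    (r : ℝ → ℝ) (u : ℝ → ℝ → ℝ) : Prop :=
  ∀ x ∈ Set.Ioo (0:ℝ) L, ∀ t ∈ Set.Ico (0:ℝ) T,
    pdt u x t =
      pdx (pdx u) x t / ((r (u x t)) ^ 2 + (pdx u x t) ^ 2)
      - (deriv r (u x t) / r (u x t)) * (pdx u x t) ^ 2
          / ((r (u x t)) ^ 2 + (pdx u x t) ^ 2)
      + (pdx u x t / (r (u x t)) ^ 2) *
          ((lam * m1) / Real.tan (lam * x) + (2 * lam * m2) / Real.tan (2 * lam * x))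
      - n * (deriv r (u x t) / r (u x t))

/-- Neumann boundary conditions `∂û/∂x(0,t) = ∂û/∂x(L,t) = 0` for all `t ∈ [0,T)`. -/
def NeumannBC (L T : ℝ) (u : ℝ → ℝ → ℝ) : Prop :=
  ∀ t ∈ Set.Ico (0:ℝ) T, pdx u 0 t = 0 ∧ pdx u L t = 0

lemma key_alg (N α A B b M P R Rz Pz D : ℝ)
    (hN : 0 ≤ N)
    (hR : 0 < R) (hRz : 0 < Rz) (hPz : 0 < Pz)
    (hM : (0:ℝ) ≤ M)
    (hRzR : Rz ≤ R)
    (hD : α * (P / R) ^ 2 ≤ D)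
    (hmono : Pz / Rz ≤ P / R) :
    (A / (R ^ 2 + M) + b * B - 2 * N * D * M - D * (2 * M ^ 2 / (R ^ 2 + M))
        + 2 * (N + 1) * M ^ 2 * P ^ 2 / R ^ 4) / Rz ^ 2
      + 2 * N * M * Pz ^ 2 / Rz ^ 4
    ≤ A / Rz ^ 2 / (R ^ 2 + M) + b * (B / Rz ^ 2)
      - 2 * (P / R) ^ 2 * (M / Rz ^ 2) *
          (N * α + α * M / (R ^ 2 + M) - (N + 1) * (M / Rz ^ 2) - N) := by
  have hQ : (0:ℝ) < R ^ 2 + M := by positivity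
  have h1 : (0:ℝ) ≤ D - α * (P / R) ^ 2 := by linarith
  have h3 : (1:ℝ) / R ^ 2 ≤ 1 / Rz ^ 2 := by
    apply one_div_le_one_div_of_le (by positivity)
    nlinarith
  have h4 : (Pz / Rz) ^ 2 ≤ (P / R) ^ 2 := by
    have h0 : (0:ℝ) ≤ Pz / Rz := le_of_lt (div_pos hPz hRz)
    nlinarith
  have hT1 : (0:ℝ) ≤ 2 * N * M * (D - α * (P / R) ^ 2) / Rz ^ 2 := by positivity
  have hT2 : (0:ℝ) ≤ 2 * M ^ 2 / (R ^ 2 + M) * (D - α * (P / R) ^ 2) / Rz ^ 2 := by positivity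
  have hT3 : (0:ℝ) ≤ 2 * (N + 1) * M ^ 2 * P ^ 2 * (1 / Rz ^ 2 - 1 / R ^ 2) / (R ^ 2 * Rz ^ 2) := by
    have : (0:ℝ) ≤ 1 / Rz ^ 2 - 1 / R ^ 2 := by linarith
    positivity
  have hT4 : (0:ℝ) ≤ 2 * N * M * ((P / R) ^ 2 - (Pz / Rz) ^ 2) / Rz ^ 2 := by
    have : (0:ℝ) ≤ (P / R) ^ 2 - (Pz / Rz) ^ 2 := by linarith
    positivity
  have hkey :
      (A / Rz ^ 2 / (R ^ 2 + M) + b * (B / Rz ^ 2)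
        - 2 * (P / R) ^ 2 * (M / Rz ^ 2) *
            (N * α + α * M / (R ^ 2 + M) - (N + 1) * (M / Rz ^ 2) - N))
      - ((A / (R ^ 2 + M) + b * B - 2 * N * D * M - D * (2 * M ^ 2 / (R ^ 2 + M))
          + 2 * (N + 1) * M ^ 2 * P ^ 2 / R ^ 4) / Rz ^ 2
        + 2 * N * M * Pz ^ 2 / Rz ^ 4)
      = 2 * N * M * (D - α * (P / R) ^ 2) / Rz ^ 2
        + 2 * M ^ 2 / (R ^ 2 + M) * (D - α * (P / R) ^ 2) / Rz ^ 2
        + 2 * (N + 1) * M ^ 2 * P ^ 2 * (1 / Rz ^ 2 - 1 / R ^ 2) / (R ^ 2 * Rz ^ 2)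
        + 2 * N * M * ((P / R) ^ 2 - (Pz / Rz) ^ 2) / Rz ^ 2 := by
    field_simp
    ring
  linarith

/-- **Evolution inequality for `ψ = μ / r(Z)²` (Theorem B).** Under `r' > 0` and
`(r'/r)' ≥ α (r'/r)²` on `I`, if `μ = (û')²` satisfies the evolution inequality with
coefficient `β` and `Z' = −n r'(Z)/r(Z)` with `Z ≤ û`, then `ψ := μ / r(Z)²` satisfies
`∂ψ/∂t ≤ ψ''/(r(û)² + μ) + β ψ' − 2 (r'(û)/r(û))² ψ (nα + αμ/(r(û)² + μ) − (n+1)ψ − n)`. -/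
theorem psi_evolution_inequality
    (n m1 m2 : ℕ) (hn : 1 ≤ n) (hm : m1 + m2 = n - 1)
    (lam : ℝ) (hlam : 0 < lam) (L : ℝ) (hL : L = Real.pi / (2 * lam))
    (T : ℝ) (hT : 0 < T) (α : ℝ) (hα : 1 < α)
    (I : Set ℝ) (hIopen : IsOpen I) (hIconv : Convex ℝ I)
    (r : ℝ → ℝ) (hr_smooth : ContDiffOn ℝ (⊤:ℕ∞) r I)
    (hr_pos : ∀ z ∈ I, 0 < r z)
    (hdr_pos : ∀ z ∈ I, 0 < deriv r z)
    (hlog : ∀ z ∈ I,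
      α * (deriv r z / r z) ^ 2 ≤ deriv (fun w => deriv r w / r w) z)
    (u : ℝ → ℝ → ℝ)
    (hu_smooth : ContDiffOn ℝ (⊤:ℕ∞) (fun p : ℝ × ℝ => u p.1 p.2) (Icc 0 L ×ˢ Ico 0 T))
    (hu_mem : ∀ x ∈ Icc (0:ℝ) L, ∀ t ∈ Ico (0:ℝ) T, u x t ∈ I)
    (hpde : IsReducedFlowSolution n lam m1 m2 L T r u)
    (β : ℝ → ℝ → ℝ)
    (hβ_smooth : ContDiffOn ℝ (⊤:ℕ∞) (fun p : ℝ × ℝ => β p.1 p.2) (Ioo 0 L ×ˢ Ico 0 T))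
    (hμineq : ∀ x ∈ Ioo (0:ℝ) L, ∀ t ∈ Ico (0:ℝ) T,
      pdt (fun y s => (pdx u y s) ^ 2) x t ≤
        pdx (pdx (fun y s => (pdx u y s) ^ 2)) x t
            / ((r (u x t)) ^ 2 + (pdx u x t) ^ 2)
        + β x t * pdx (fun y s => (pdx u y s) ^ 2) x t
        - 2 * n * deriv (fun z => deriv r z / r z) (u x t) * (pdx u x t) ^ 2
        - deriv (fun z => deriv r z / r z) (u x t) *
            (2 * ((pdx u x t) ^ 2) ^ 2 / ((r (u x t)) ^ 2 + (pdx u x t) ^ 2))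
        + 2 * (n + 1) * ((pdx u x t) ^ 2) ^ 2 * (deriv r (u x t)) ^ 2
            / (r (u x t)) ^ 4)
    (Z : ℝ → ℝ) (hZmem : ∀ t ∈ Ico (0:ℝ) T, Z t ∈ I)
    (hZode : ∀ t ∈ Ico (0:ℝ) T,
      HasDerivAt Z (-(n : ℝ) * (deriv r (Z t) / r (Z t))) t)
    (hZle : ∀ x ∈ Icc (0:ℝ) L, ∀ t ∈ Ico (0:ℝ) T, Z t ≤ u x t) :
    ∀ x ∈ Ioo (0:ℝ) L, ∀ t ∈ Ico (0:ℝ) T,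
      pdt (fun y s => (pdx u y s) ^ 2 / (r (Z s)) ^ 2) x t ≤
        pdx (pdx (fun y s => (pdx u y s) ^ 2 / (r (Z s)) ^ 2)) x t
            / ((r (u x t)) ^ 2 + (pdx u x t) ^ 2)
        + β x t * pdx (fun y s => (pdx u y s) ^ 2 / (r (Z s)) ^ 2) x t
        - 2 * (deriv r (u x t) / r (u x t)) ^ 2 *
            ((pdx u x t) ^ 2 / (r (Z t)) ^ 2) *
            (n * α + α * (pdx u x t) ^ 2 / ((r (u x t)) ^ 2 + (pdx u x t) ^ 2)
              - (n + 1) * ((pdx u x t) ^ 2 / (r (Z t)) ^ 2) - n) := by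
  intro x hx t ht
  have hxI : x ∈ Icc (0:ℝ) L := Ioo_subset_Icc_self hx
  have huI : u x t ∈ I := hu_mem x hxI t ht
  have hZI : Z t ∈ I := hZmem t ht
  have hR : 0 < r (u x t) := hr_pos _ huI
  have hRz : 0 < r (Z t) := hr_pos _ hZI
  have hP : 0 < deriv r (u x t) := hdr_pos _ huI
  have hPz : 0 < deriv r (Z t) := hdr_pos _ hZI
  have hM : (0:ℝ) ≤ (pdx u x t) ^ 2 := sq_nonneg _
  -- monotonicity of r and r'/r on I
  have hrd : DifferentiableOn ℝ r I := hr_smooth.differentiableOn (by norm_cast)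
  have hI_int : interior I = I := hIopen.interior_eq
  have hrmono : MonotoneOn r I := by
    apply monotoneOn_of_deriv_nonneg hIconv hrd.continuousOn
      (by rw [hI_int]; exact hrd)
    intro z hz; rw [hI_int] at hz; exact (hdr_pos z hz).le
  have hdrd : DifferentiableOn ℝ (deriv r) I :=
    (hr_smooth.deriv_of_isOpen (m := 1) hIopen (by norm_cast)).differentiableOn (by norm_cast)
  have hhd : DifferentiableOn ℝ (fun w => deriv r w / r w) I :=
    hdrd.div hrd (fun z hz => (hr_pos z hz).ne')
  have hhmono : MonotoneOn (fun w => deriv r w / r w) I := by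
    apply monotoneOn_of_deriv_nonneg hIconv hhd.continuousOn
      (by rw [hI_int]; exact hhd)
    intro z hz; rw [hI_int] at hz
    have h := hlog z hz
    nlinarith [sq_nonneg (deriv r z / r z)]
  have hZleu : Z t ≤ u x t := hZle x hxI t ht
  have hRzR : r (Z t) ≤ r (u x t) := hrmono hZI huI hZleu
  have hmono2 : deriv r (Z t) / r (Z t) ≤ deriv r (u x t) / r (u x t) :=
    hhmono hZI huI hZleu
  have hD := hlog _ huI
  -- derivative of s ↦ r(Z s)^2 at t
  have hZ' := hZode t ht
  have hrZ : HasDerivAt (fun s => r (Z s))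
      (deriv r (Z t) * (-(n : ℝ) * (deriv r (Z t) / r (Z t)))) t := by
    have hrat : HasDerivAt r (deriv r (Z t)) (Z t) :=
      (hrd.differentiableAt (hIopen.mem_nhds hZI)).hasDerivAt
    exact hrat.comp t hZ'
  have hg : HasDerivAt (fun s => (r (Z s)) ^ 2)
      (2 * r (Z t) * (deriv r (Z t) * (-(n : ℝ) * (deriv r (Z t) / r (Z t))))) t := by
    have h2 := hrZ.fun_pow 2
    norm_num at h2
    refine h2.congr_deriv ?_
    ring
  have hgt0 : (r (Z t)) ^ 2 ≠ 0 := by positivity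
  -- Step A : time derivative inequality
  have hStepA : pdt (fun y s => (pdx u y s) ^ 2 / (r (Z s)) ^ 2) x t ≤
      pdt (fun y s => (pdx u y s) ^ 2) x t / (r (Z t)) ^ 2
        + 2 * (n : ℝ) * (pdx u x t) ^ 2 * (deriv r (Z t)) ^ 2 / (r (Z t)) ^ 4 := by
    by_cases hf : DifferentiableAt ℝ (fun s => (pdx u x s) ^ 2) t
    · have hdq : pdt (fun y s => (pdx u y s) ^ 2 / (r (Z s)) ^ 2) x t =
          (deriv (fun s => (pdx u x s) ^ 2) t * (r (Z t)) ^ 2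
            - (pdx u x t) ^ 2 *
              (2 * r (Z t) * (deriv r (Z t) * (-(n : ℝ) * (deriv r (Z t) / r (Z t)))))) /
            ((r (Z t)) ^ 2) ^ 2 := by
        show deriv (fun s => (pdx u x s) ^ 2 / (r (Z s)) ^ 2) t = _
        rw [deriv_fun_div hf hg.differentiableAt hgt0, hg.deriv]
      rw [hdq]
      have hpt : pdt (fun y s => (pdx u y s) ^ 2) x t = deriv (fun s => (pdx u x s) ^ 2) t := rfl
      rw [hpt]
      apply le_of_eq
      have hRzne : r (Z t) ≠ 0 := hRz.ne'
      field_simp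
      ring
    · have hpsi_nd : ¬ DifferentiableAt ℝ (fun s => (pdx u x s) ^ 2 / (r (Z s)) ^ 2) t := by
        intro hcon
        apply hf
        have hgne : ∀ᶠ s in nhds t, (r (Z s)) ^ 2 ≠ 0 :=
          hg.differentiableAt.continuousAt.eventually_ne hgt0
        have heq : (fun s => (pdx u x s) ^ 2 / (r (Z s)) ^ 2 * (r (Z s)) ^ 2)
            =ᶠ[nhds t] (fun s => (pdx u x s) ^ 2) := by
          filter_upwards [hgne] with s hs
          exact div_mul_cancel₀ _ hs
        exact (hcon.mul hg.differentiableAt).congr_of_eventuallyEq heq.symm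
      have h1 : pdt (fun y s => (pdx u y s) ^ 2 / (r (Z s)) ^ 2) x t = 0 :=
        deriv_zero_of_not_differentiableAt hpsi_nd
      have h2 : pdt (fun y s => (pdx u y s) ^ 2) x t = 0 :=
        deriv_zero_of_not_differentiableAt hf
      rw [h1, h2]
      positivity
  -- spatial derivative rewrites
  have hpdx : ∀ y : ℝ, pdx (fun y s => (pdx u y s) ^ 2 / (r (Z s)) ^ 2) y t =
      pdx (fun y s => (pdx u y s) ^ 2) y t / (r (Z t)) ^ 2 := by
    intro y
    show deriv (fun y' => (pdx u y' t) ^ 2 / (r (Z t)) ^ 2) y = _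
    rw [deriv_div_const]
    rfl
  have hpdxx : pdx (pdx (fun y s => (pdx u y s) ^ 2 / (r (Z s)) ^ 2)) x t =
      pdx (pdx (fun y s => (pdx u y s) ^ 2)) x t / (r (Z t)) ^ 2 := by
    show deriv (fun y => pdx (fun y s => (pdx u y s) ^ 2 / (r (Z s)) ^ 2) y t) x = _
    have hfe : (fun y => pdx (fun y s => (pdx u y s) ^ 2 / (r (Z s)) ^ 2) y t)
        = fun y => pdx (fun y s => (pdx u y s) ^ 2) y t / (r (Z t)) ^ 2 := funext hpdx
    rw [hfe, deriv_div_const]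
    rfl
  rw [hpdxx, hpdx x]
  have hmu := hμineq x hx t ht
  refine hStepA.trans (le_trans ?_
    (key_alg (n : ℝ) α (pdx (pdx (fun y s => (pdx u y s) ^ 2)) x t)
      (pdx (fun y s => (pdx u y s) ^ 2) x t) (β x t) ((pdx u x t) ^ 2)
      (deriv r (u x t)) (r (u x t)) (r (Z t)) (deriv r (Z t))
      (deriv (fun z => deriv r z / r z) (u x t))
      (Nat.cast_nonneg n) hR hRz hPz hM hRzR hD hmono2))
  have hdiv : pdt (fun y s => (pdx u y s) ^ 2) x t / (r (Z t)) ^ 2 ≤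
      (pdx (pdx (fun y s => (pdx u y s) ^ 2)) x t
          / ((r (u x t)) ^ 2 + (pdx u x t) ^ 2)
        + β x t * pdx (fun y s => (pdx u y s) ^ 2) x t
        - 2 * n * deriv (fun z => deriv r z / r z) (u x t) * (pdx u x t) ^ 2
        - deriv (fun z => deriv r z / r z) (u x t) *
            (2 * ((pdx u x t) ^ 2) ^ 2 / ((r (u x t)) ^ 2 + (pdx u x t) ^ 2))
        + 2 * (n + 1) * ((pdx u x t) ^ 2) ^ 2 * (deriv r (u x t)) ^ 2
            / (r (u x t)) ^ 4) / (r (Z t)) ^ 2 := by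
    apply div_le_div_of_nonneg_right hmu
    positivity
  linarith [hdiv]
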